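/- Let Ω ⊂ ℝ^N be bounded open of class C², K as above, d_Ω the Minkowski distance to ∂Ω associated to ρ⁰ = ρ_{K⁰}, and d_Ω⁻ the distance associated to the gauge of −K⁰. Then every u ∈ Lip_ρ(Ω) with u = 0 on ∂Ω satisfies −d_Ω⁻(x) ≤ u(x) ≤ d_Ω(x) for all x ∈ Ω. Moreover, if u ∈ Lip_ρ(Ω) with u ≥ 0 on ∂Ω then u ≥ −d_Ω⁻, and if u ≤ 0 on ∂Ω then u ≤ d_Ω. -/

import Mathlib

/-!
Write `ρ = gauge K⁰`. If `p ∈ K` then `⟪p, v⟫ ≤ ρ v`, so a.e. in `Ω` the directional derivatives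
of `u` satisfy `Du(z) v ≤ ρ v`. By Fubini, almost every translate of a segment in `Ω` meets the
exceptional set in a null set of parameters; on such a segment the fundamental theorem of calculus
for absolutely continuous functions gives `u b - u a ≤ ρ (b - a)`, and continuity of
`y ↦ u (y + v) - u y` passes the bound to every segment in `Ω`. For `x ∈ Ω` and `y ∈ ∂Ω`, go from
`x` towards `y` up to the first boundary point `z`: then `u x - u z ≤ ρ (x - y)` and
`u z - u x ≤ ρ (y - x)`, and the sign of `u z` gives the bounds on `u x` after taking the infimum
over `y`.
-/

open MeasureTheory Set RealInnerProductSpace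
open scoped NNReal

/-- The polar set `K⁰ = {p : ⟪p,x⟫ ≤ 1 ∀ x ∈ K}`. -/
def polarSet {N : ℕ} (K : Set (EuclideanSpace ℝ (Fin N))) : Set (EuclideanSpace ℝ (Fin N)) :=
  {p | ∀ x ∈ K, ⟪p, x⟫ ≤ 1}

/-- `Ω` is a domain of class `C²`. -/
def IsC2Domain {N : ℕ} (Ω : Set (EuclideanSpace ℝ (Fin N))) : Prop :=
  ∀ x ∈ frontier Ω, ∃ (U : Set (EuclideanSpace ℝ (Fin N))) (f : EuclideanSpace ℝ (Fin N) → ℝ),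
    x ∈ U ∧ IsOpen U ∧ ContDiffOn ℝ 2 f U ∧ (∀ y ∈ U, fderivWithin ℝ f U y ≠ 0) ∧
    Ω ∩ U = {y ∈ U | f y < 0}

/-- The Minkowski distance from `∂Ω` induced by the gauge of `K⁰`. -/
noncomputable def mdist {N : ℕ} (K Ω : Set (EuclideanSpace ℝ (Fin N)))
    (x : EuclideanSpace ℝ (Fin N)) : ℝ :=
  sInf ((fun y => gauge (polarSet K) (x - y)) '' frontier Ω)

/-- The Minkowski distance from `∂Ω` induced by the gauge of `−K⁰`
(note `ρ_{-K⁰}(x−y) = ρ_{K⁰}(y−x)`). -/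
noncomputable def mdistNeg {N : ℕ} (K Ω : Set (EuclideanSpace ℝ (Fin N)))
    (x : EuclideanSpace ℝ (Fin N)) : ℝ :=
  sInf ((fun y => gauge (polarSet K) (y - x)) '' frontier Ω)

open Filter
open scoped Topology

lemma polarSet_mem_nhds_zero {N : ℕ} {K : Set (EuclideanSpace ℝ (Fin N))}
    (hK : Bornology.IsBounded K) : polarSet K ∈ 𝓝 0 := by
  obtain ⟨R, hR, hKR⟩ := hK.subset_closedBall_lt 0 0
  refine mem_of_superset (Metric.ball_mem_nhds 0 (inv_pos.2 hR)) fun p hp x hx => ?_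
  have hp' : ‖p‖ ≤ R⁻¹ := by simpa using (Metric.mem_ball.1 hp).le
  have hx' : ‖x‖ ≤ R := by simpa using hKR hx
  calc ⟪p, x⟫ ≤ ‖p‖ * ‖x‖ := real_inner_le_norm p x
    _ ≤ R⁻¹ * R := mul_le_mul hp' hx' (norm_nonneg x) (inv_nonneg.2 hR.le)
    _ = 1 := inv_mul_cancel₀ hR.ne'

lemma inner_le_gauge_polarSet {N : ℕ} {K : Set (EuclideanSpace ℝ (Fin N))}
    (hK : Bornology.IsBounded K) {p : EuclideanSpace ℝ (Fin N)} (hp : p ∈ K)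
    (v : EuclideanSpace ℝ (Fin N)) : ⟪p, v⟫ ≤ gauge (polarSet K) v := by
  refine le_csInf (absorbent_nhds_zero (polarSet_mem_nhds_zero hK)).gauge_set_nonempty ?_
  rintro r ⟨hr, q, hq, rfl⟩
  simpa [real_inner_smul_right, real_inner_comm] using
    mul_le_mul_of_nonneg_left (hq p hp) (le_of_lt hr)

lemma ae_fderiv_le_gauge_polarSet {N : ℕ} {Ω K : Set (EuclideanSpace ℝ (Fin N))}
    (hΩ : MeasurableSet Ω) (hK : Bornology.IsBounded K) {u : EuclideanSpace ℝ (Fin N) → ℝ}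
    (hgrad : ∀ᵐ z ∂(volume.restrict Ω), gradient u z ∈ K) :
    ∀ᵐ z, z ∈ Ω → ∀ v, fderiv ℝ u z v ≤ gauge (polarSet K) v := by
  filter_upwards [(ae_restrict_iff' hΩ).1 hgrad] with z hz hzΩ v
  rw [← InnerProductSpace.toDual_symm_apply]
  exact inner_le_gauge_polarSet hK (hz hzΩ) v

theorem AbsolutelyContinuousOnInterval.sub_le_mul_of_ae_deriv_le {f : ℝ → ℝ} {a b c : ℝ}
    (hf : AbsolutelyContinuousOnInterval f a b) (hab : a ≤ b)
    (h : ∀ᵐ t, t ∈ Icc a b → deriv f t ≤ c) : f b - f a ≤ c * (b - a) := by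
  rw [← hf.integral_deriv_eq_sub]
  calc ∫ t in a..b, deriv f t ≤ ∫ _ in a..b, c :=
        intervalIntegral.integral_mono_ae_restrict hab hf.intervalIntegrable_deriv
          intervalIntegrable_const ((ae_restrict_iff' measurableSet_Icc).2 h)
    _ = c * (b - a) := by simp [mul_comm]

theorem ContinuousAt.le_of_ae_le {X : Type*} [TopologicalSpace X] [MeasurableSpace X]
    {μ : Measure X} [μ.IsOpenPosMeasure] {f : X → ℝ} {x : X} {c : ℝ} {p : X → Prop}
    (hf : ContinuousAt f x) (hp : ∀ᶠ y in 𝓝 x, p y) (h : ∀ᵐ y ∂μ, p y → f y ≤ c) : f x ≤ c := by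
  by_contra! hlt
  obtain ⟨y, ⟨hpy, hy⟩, hy'⟩ := Measure.exists_mem_of_measure_ne_zero_of_ae
    (Measure.measure_pos_of_mem_nhds μ (hp.and (hf.eventually (lt_mem_nhds hlt)))).ne'
    (ae_restrict_of_ae h)
  exact (hy' hpy).not_gt hy

section Segments

variable {E : Type*} [NormedAddCommGroup E] [NormedSpace ℝ E] {U : Set E} {w : E → ℝ}
  {C : ℝ≥0} {c : ℝ}

theorem IsOpen.exists_mem_frontier_add_smul (hU : IsOpen U) {x y : E} (hx : x ∈ U)
    (hy : y ∉ U) : ∃ t ∈ Icc (0 : ℝ) 1, x + t • (y - x) ∈ frontier U ∧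
      ∀ s ∈ Ico (0 : ℝ) 1, x + s • t • (y - x) ∈ U := by
  set T := Icc (0 : ℝ) 1 ∩ (fun t : ℝ => x + t • (y - x)) ⁻¹' Uᶜ
  have hT : IsClosed T := isClosed_Icc.inter (hU.isClosed_compl.preimage (by fun_prop))
  have hTbdd : BddBelow T := ⟨0, fun t ht => ht.1.1⟩
  have ht₀ : sInf T ∈ T := hT.csInf_mem ⟨1, ⟨zero_le_one, le_rfl⟩, by simpa using hy⟩ hTbdd
  have hbefore : ∀ s ∈ Ico 0 (sInf T), x + s • (y - x) ∈ U := fun s hs => by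
    by_contra hsU
    exact (csInf_le hTbdd ⟨⟨hs.1, hs.2.le.trans ht₀.1.2⟩, hsU⟩).not_gt hs.2
  have hpos : 0 < sInf T := ht₀.1.1.lt_of_ne fun h => ht₀.2 (by simpa [← h] using hx)
  refine ⟨sInf T, ht₀.1, ?_, fun s hs => ?_⟩
  · rw [hU.frontier_eq]
    refine ⟨map_mem_closure (f := fun t : ℝ => x + t • (y - x)) (by fun_prop) ?_ hbefore, ht₀.2⟩
    rw [closure_Ico hpos.ne]
    exact right_mem_Icc.2 hpos.le
  · rw [smul_smul]
    exact hbefore _ ⟨mul_nonneg hs.1 hpos.le, mul_lt_of_lt_one_left hpos hs.2⟩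

theorem LipschitzOnWith.sub_le_of_ae_fderiv_le_on_line (hw : LipschitzOnWith C w U) {y v : E}
    (hseg : ∀ t ∈ Icc (0 : ℝ) 1, y + t • v ∈ U)
    (h : ∀ᵐ t : ℝ, y + t • v ∈ U → DifferentiableAt ℝ w (y + t • v) ∧
      fderiv ℝ w (y + t • v) v ≤ c) :
    w (y + v) - w y ≤ c := by
  have hline : LipschitzWith ‖v‖₊ fun t : ℝ => y + t • v :=
    LipschitzWith.of_dist_le_mul fun s t => by
      simp [dist_eq_norm, ← sub_smul, norm_smul, mul_comm]
  have hac : AbsolutelyContinuousOnInterval (fun t => w (y + t • v)) 0 1 :=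
    LipschitzOnWith.absolutelyContinuousOnInterval
      (hw.comp hline.lipschitzOnWith fun t ht => hseg t (by simpa using ht))
  have hderiv : ∀ᵐ t, t ∈ Icc (0 : ℝ) 1 → deriv (fun t => w (y + t • v)) t ≤ c := by
    filter_upwards [h] with t ht ht01
    obtain ⟨hdiff, hle⟩ := ht (hseg t ht01)
    have hlin : HasDerivAt (fun s : ℝ => y + s • v) v t := by
      simpa using ((hasDerivAt_id t).smul_const v).const_add y
    change deriv (w ∘ fun s : ℝ => y + s • v) t ≤ c
    rwa [(hdiff.hasFDerivAt.comp_hasDerivAt t hlin).deriv]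
  simpa using hac.sub_le_mul_of_ae_deriv_le zero_le_one hderiv

variable [FiniteDimensional ℝ E] [MeasurableSpace E] [BorelSpace E]

theorem ae_ae_add_smul_of_ae {μ : Measure E} [μ.IsAddRightInvariant] [SFinite μ]
    {p : E → Prop} (h : ∀ᵐ z ∂μ, p z) (v : E) : ∀ᵐ y ∂μ, ∀ᵐ t : ℝ, p (y + t • v) := by
  obtain ⟨B, hpB, hBmeas, hB⟩ := exists_measurable_superset_of_null (ae_iff.1 h)
  have hG : Measurable fun q : E × ℝ => q.1 + q.2 • v := by fun_prop
  have hprod : (μ.prod volume) ((fun q : E × ℝ => q.1 + q.2 • v) ⁻¹' B) = 0 := by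
    rw [Measure.prod_apply_symm (hG hBmeas)]
    simp only [preimage_preimage, measure_preimage_add_right, hB, lintegral_zero]
  filter_upwards [Measure.ae_ae_of_ae_prod (measure_eq_zero_iff_ae_notMem.1 hprod)] with y hy
  filter_upwards [hy] with t ht
  by_contra hp
  exact ht (hpB hp)

variable {μ : Measure E} [μ.IsAddHaarMeasure]

theorem LipschitzOnWith.sub_le_of_ae_fderiv_le (hU : IsOpen U) (hw : LipschitzOnWith C w U)
    {a v : E} (hseg : ∀ t ∈ Icc (0 : ℝ) 1, a + t • v ∈ U)
    (h : ∀ᵐ z ∂μ, z ∈ U → fderiv ℝ w z v ≤ c) : w (a + v) - w a ≤ c := by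
  have hgood : ∀ᵐ z ∂μ, z ∈ U → DifferentiableAt ℝ w z ∧ fderiv ℝ w z v ≤ c := by
    filter_upwards [hw.ae_differentiableWithinAt_of_mem (μ := μ), h] with z hd hc hz
    exact ⟨(hd hz).differentiableAt (hU.mem_nhds hz), hc hz⟩
  have hnear : ∀ᶠ y in 𝓝 a, ∀ t ∈ Icc (0 : ℝ) 1, y + t • v ∈ U :=
    isCompact_Icc.eventually_forall_of_forall_eventually fun t ht =>
      (continuous_fst.add (continuous_snd.smul continuous_const)).continuousAt.preimage_mem_nhds
        (hU.mem_nhds (hseg t ht))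
  have hae : ∀ᵐ y ∂μ, (∀ t ∈ Icc (0 : ℝ) 1, y + t • v ∈ U) → w (y + v) - w y ≤ c := by
    filter_upwards [ae_ae_add_smul_of_ae hgood v] with y hy hyU
    exact hw.sub_le_of_ae_fderiv_le_on_line hyU hy
  have ha : a ∈ U := by simpa using hseg 0 ⟨le_rfl, zero_le_one⟩
  have hav : a + v ∈ U := by simpa using hseg 1 ⟨zero_le_one, le_rfl⟩
  have hcont : ContinuousAt (fun y => w (y + v)) a :=
    ContinuousAt.comp (g := w) (f := fun y => y + v)
      (hw.continuousOn.continuousAt (hU.mem_nhds hav)) (continuous_add_const v).continuousAt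
  exact (hcont.sub (hw.continuousOn.continuousAt (hU.mem_nhds ha))).le_of_ae_le hnear hae

theorem LipschitzOnWith.sub_le_of_ae_fderiv_le_of_continuousWithinAt (hU : IsOpen U)
    (hw : LipschitzOnWith C w U) {a v : E} (hwc : ContinuousWithinAt w U (a + v))
    (hseg : ∀ t ∈ Ico (0 : ℝ) 1, a + t • v ∈ U) (h : ∀ᵐ z ∂μ, z ∈ U → fderiv ℝ w z v ≤ c) :
    w (a + v) - w a ≤ c := by
  have hscaled : ∀ s ∈ Ico (0 : ℝ) 1, w (a + s • v) - w a ≤ s * c := by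
    intro s hs
    refine hw.sub_le_of_ae_fderiv_le (μ := μ) hU (fun t ht => ?_) ?_
    · rw [smul_smul]
      exact hseg _ ⟨mul_nonneg ht.1 hs.1, (mul_le_of_le_one_left hs.1 ht.2).trans_lt hs.2⟩
    · filter_upwards [h] with z hz hzU
      rw [map_smul, smul_eq_mul]
      exact mul_le_mul_of_nonneg_left (hz hzU) hs.1
  have hpath : Tendsto (fun s : ℝ => a + s • v) (𝓝[<] 1) (𝓝[U] (a + v)) :=
    tendsto_nhdsWithin_iff.2 ⟨((by fun_prop : Continuous fun s : ℝ => a + s • v).tendsto' 1 _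
      (by simp)).mono_left nhdsWithin_le_nhds, mem_of_superset (Ico_mem_nhdsLT zero_lt_one) hseg⟩
  have hlim : Tendsto (fun s : ℝ => s * c) (𝓝[<] 1) (𝓝 c) :=
    ((continuous_mul_const c).tendsto' 1 c (one_mul c)).mono_left nhdsWithin_le_nhds
  exact le_of_tendsto_of_tendsto ((hwc.tendsto.comp hpath).sub_const (w a)) hlim
    (mem_of_superset (Ico_mem_nhdsLT zero_lt_one) hscaled)

theorem exists_mem_frontier_sub_le_gauge {s : Set E} (hU : IsOpen U)
    (hw : LipschitzOnWith C w (closure U))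
    (h : ∀ᵐ z ∂μ, z ∈ U → ∀ v, fderiv ℝ w z v ≤ gauge s v) {x y : E} (hx : x ∈ U)
    (hy : y ∉ U) :
    ∃ z ∈ frontier U, w z - w x ≤ gauge s (y - x) ∧ w x - w z ≤ gauge s (x - y) := by
  obtain ⟨t, ht, hz, hseg⟩ := hU.exists_mem_frontier_add_smul hx hy
  have hgauge : ∀ v, gauge s (t • v) ≤ gauge s v := fun v => by
    rw [gauge_smul_of_nonneg ht.1, smul_eq_mul]
    exact mul_le_of_le_one_left (gauge_nonneg v) ht.2
  have hwU : LipschitzOnWith C w U := hw.mono subset_closure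
  have hwz : ContinuousWithinAt w U (x + t • (y - x)) :=
    (hw.continuousOn _ (frontier_subset_closure hz)).mono subset_closure
  refine ⟨_, hz, ?_, ?_⟩
  · calc _ ≤ gauge s (t • (y - x)) :=
          hwU.sub_le_of_ae_fderiv_le_of_continuousWithinAt hU hwz hseg
            (h.mono fun z hz hzU => hz hzU _)
      _ ≤ _ := hgauge _
  · calc _ = (-w) (x + t • (y - x)) - (-w) x := by simp only [Pi.neg_apply]; ring
      _ ≤ gauge s (t • (x - y)) :=
          hwU.neg.sub_le_of_ae_fderiv_le_of_continuousWithinAt hU hwz.neg hseg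
            (h.mono fun z hz hzU => by
              simpa [fderiv_neg, ← map_neg, smul_sub] using hz hzU (t • (x - y)))
      _ ≤ _ := hgauge _

end Segments

theorem comparison_with_mdist_general (N : ℕ) (hN : 0 < N)
    (Ω : Set (EuclideanSpace ℝ (Fin N)))
    (hΩopen : IsOpen Ω) (hΩbdd : Bornology.IsBounded Ω)
    (K : Set (EuclideanSpace ℝ (Fin N)))
    (hKcomp : IsCompact K) :
    ∀ (u : EuclideanSpace ℝ (Fin N) → ℝ) (C : ℝ≥0),
      LipschitzOnWith C u (closure Ω) →
      (∀ᵐ x ∂(volume.restrict Ω), gradient u x ∈ K) →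
      ((∀ y ∈ frontier Ω, u y = 0) →
        ∀ x ∈ Ω, -mdistNeg K Ω x ≤ u x ∧ u x ≤ mdist K Ω x) ∧
      ((∀ y ∈ frontier Ω, 0 ≤ u y) → ∀ x ∈ Ω, -mdistNeg K Ω x ≤ u x) ∧
      ((∀ y ∈ frontier Ω, u y ≤ 0) → ∀ x ∈ Ω, u x ≤ mdist K Ω x) := by
  intro u C hu hgrad
  have : NeZero N := ⟨hN.ne'⟩
  have hfrontier : ∀ x ∈ Ω, (frontier Ω).Nonempty := fun x hx =>
    nonempty_frontier_iff.2 ⟨⟨x, hx⟩, fun h => NormedSpace.unbounded_univ ℝ _ (h ▸ hΩbdd)⟩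
  have hbound := ae_fderiv_le_gauge_polarSet hΩopen.measurableSet hKcomp.isBounded hgrad
  have key : ∀ x ∈ Ω, ∀ y ∈ frontier Ω, ∃ z ∈ frontier Ω,
      u z - u x ≤ gauge (polarSet K) (y - x) ∧ u x - u z ≤ gauge (polarSet K) (x - y) :=
    fun x hx y hy =>
      exists_mem_frontier_sub_le_gauge hΩopen hu hbound hx (hΩopen.frontier_eq ▸ hy).2
  have upper : (∀ y ∈ frontier Ω, u y ≤ 0) → ∀ x ∈ Ω, u x ≤ mdist K Ω x := by
    intro hb x hx
    refine le_csInf ((hfrontier x hx).image _) ?_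
    rintro _ ⟨y, hy, rfl⟩
    obtain ⟨z, hz, -, hle⟩ := key x hx y hy
    linarith [hb z hz]
  have lower : (∀ y ∈ frontier Ω, 0 ≤ u y) → ∀ x ∈ Ω, -mdistNeg K Ω x ≤ u x := by
    intro hb x hx
    rw [mdistNeg, neg_le]
    refine le_csInf ((hfrontier x hx).image _) ?_
    rintro _ ⟨y, hy, rfl⟩
    obtain ⟨z, hz, hle, -⟩ := key x hx y hy
    linarith [hb z hz]
  exact ⟨fun h0 x hx => ⟨lower (fun y hy => (h0 y hy).ge) x hx,
    upper (fun y hy => (h0 y hy).le) x hx⟩, lower, upper⟩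

/-- comparison with the Minkowski distances. Every `u ∈ Lip_ρ(Ω)` vanishing
on `∂Ω` satisfies `−d_Ω⁻ ≤ u ≤ d_Ω` in `Ω`; if `u ≥ 0` on `∂Ω` then `u ≥ −d_Ω⁻`, and if
`u ≤ 0` on `∂Ω` then `u ≤ d_Ω`. -/
theorem comparison_with_mdist (N : ℕ) (hN : 0 < N)
    (Ω : Set (EuclideanSpace ℝ (Fin N)))
    (hΩopen : IsOpen Ω) (hΩbdd : Bornology.IsBounded Ω) (hΩne : Ω.Nonempty)
    (hΩC2 : IsC2Domain Ω)
    (K : Set (EuclideanSpace ℝ (Fin N)))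
    (hKcomp : IsCompact K) (hKconv : Convex ℝ K)
    (hK0 : (0 : EuclideanSpace ℝ (Fin N)) ∈ interior K) :
    ∀ (u : EuclideanSpace ℝ (Fin N) → ℝ) (C : ℝ≥0),
      LipschitzOnWith C u (closure Ω) →
      (∀ᵐ x ∂(volume.restrict Ω), gradient u x ∈ K) →
      ((∀ y ∈ frontier Ω, u y = 0) →
        ∀ x ∈ Ω, -mdistNeg K Ω x ≤ u x ∧ u x ≤ mdist K Ω x) ∧
      ((∀ y ∈ frontier Ω, 0 ≤ u y) → ∀ x ∈ Ω, -mdistNeg K Ω x ≤ u x) ∧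
      ((∀ y ∈ frontier Ω, u y ≤ 0) → ∀ x ∈ Ω, u x ≤ mdist K Ω x) :=
  comparison_with_mdist_general N hN Ω hΩopen hΩbdd K hKcomp
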